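/- arXiv:0902.4806 — 3 statements merged into one kernel-verified Lean document; each statement's English description precedes it below -/
import Mathlib

section
/- Let a > 1/2 and μ ≥ 0, and set d = 1/2 − a + √(μ/2 + (a − 1/2)²) and ν = d + a + 1/2. For all t > 0, x > 0, and λ ≥ 0, with p(t,x,y) = (y/t) (y/x)^{a−1/2} exp( −(x²+y²)/(2t) ) I_{ν−1}(xy/t), one has ∫_0^∞ e^{−λ y²} y^d p(t,x,y) dy = x^d (1 + 2λt)^{−ν} exp( −λ x²/(1 + 2λt) ). -/
/-!
Expanding `I_{ν-1}` in its power series turns the integrand into a series of nonnegative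
terms `y ^ (2k + 2ν - 1) * exp (-c y²)` with `c = λ + 1/(2t)`. Each integrates to
`Γ(k+ν) / (2 c^(k+ν))`, the Gamma factors cancel those of the Bessel series, and what is left
is the exponential series of `x² / (2t (1 + 2λt))`; combined with the prefactor
`exp (-x²/(2t))` this gives `exp (-λ x² / (1 + 2λt))`. The condition `ν > 0` needed for the
Gamma integrals holds since `ν = 1 + √(μ/2 + (a - 1/2)²)`.
-/

open Real MeasureTheory

/-- The modified Bessel function of the first kind,
`I_ν(z) = ∑_{k=0}^∞ (z/2)^{2k+ν} / (k! Γ(k+ν+1))`. -/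
noncomputable def besselI (ν z : ℝ) : ℝ :=
  ∑' k : ℕ, (z / 2) ^ (2 * (k : ℝ) + ν) / ((Nat.factorial k : ℝ) * Real.Gamma ((k : ℝ) + ν + 1))

open Set
open scoped Nat

lemma integral_rpow_two_mul_sub_one_mul_exp_neg_mul_sq {c s : ℝ} (hc : 0 < c) (hs : 0 < s) :
    ∫ y in Ioi (0 : ℝ), y ^ (2 * s - 1) * exp (-c * y ^ 2) = Gamma s / (2 * c ^ s) := by
  simp_rw [← rpow_two]
  rw [integral_rpow_mul_exp_neg_mul_rpow two_pos (by linarith) hc,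
    show (2 * s - 1 + 1) / 2 = s by ring, show -(2 * s - 1 + 1) / 2 = -s by ring,
    rpow_neg hc.le]
  field_simp

lemma rpow_mul_besselI_sub_one_eq_tsum {ν b y : ℝ} (hb : 0 ≤ b) (hy : 0 < y) :
    y ^ ν * besselI (ν - 1) (b * y) = ∑' k : ℕ, (b / 2) ^ (2 * (k : ℝ) + ν - 1)
      / (k ! * Gamma (k + ν)) * y ^ (2 * (k : ℝ) + 2 * ν - 1) := by
  rw [besselI, ← tsum_mul_left]
  refine tsum_congr fun k => ?_
  rw [mul_div_right_comm, mul_rpow (by positivity) hy.le,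
    show (k : ℝ) + (ν - 1) + 1 = k + ν by ring,
    show 2 * (k : ℝ) + (ν - 1) = 2 * k + ν - 1 by ring,
    show 2 * (k : ℝ) + 2 * ν - 1 = ν + (2 * k + ν - 1) by ring, rpow_add hy]
  ring

lemma integral_besselI_series_term {ν b c : ℝ} (hν : 0 < ν) (hb : 0 < b) (hc : 0 < c)
    (k : ℕ) :
    ∫ y in Ioi (0 : ℝ), (b / 2) ^ (2 * (k : ℝ) + ν - 1) / (k ! * Gamma (k + ν))
        * (y ^ (2 * (k : ℝ) + 2 * ν - 1) * exp (-c * y ^ 2))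
      = (b / 2) ^ (ν - 1) / (2 * c ^ ν) * ((b ^ 2 / (4 * c)) ^ k / k !) := by
  have hkν : 0 < (k : ℝ) + ν := by positivity
  rw [integral_const_mul, show 2 * (k : ℝ) + 2 * ν - 1 = 2 * (k + ν) - 1 by ring,
    integral_rpow_two_mul_sub_one_mul_exp_neg_mul_sq hc hkν,
    show 2 * (k : ℝ) + ν - 1 = ((2 * k : ℕ) : ℝ) + (ν - 1) by push_cast; ring,
    rpow_add (by positivity), rpow_natCast, rpow_add hc, rpow_natCast, pow_mul]
  have := (Gamma_pos_of_pos hkν).ne'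
  simp only [div_pow, mul_pow]
  field_simp
  ring

theorem integral_rpow_mul_besselI_sub_one_mul_exp_neg_mul_sq {ν b c : ℝ} (hν : 0 < ν)
    (hb : 0 < b) (hc : 0 < c) :
    ∫ y in Ioi (0 : ℝ), y ^ ν * besselI (ν - 1) (b * y) * exp (-c * y ^ 2)
      = (b / 2) ^ (ν - 1) / (2 * c ^ ν) * exp (b ^ 2 / (4 * c)) := by
  set F : ℕ → ℝ → ℝ := fun k y => (b / 2) ^ (2 * (k : ℝ) + ν - 1)
    / (k ! * Gamma (k + ν))
    * (y ^ (2 * (k : ℝ) + 2 * ν - 1) * exp (-c * y ^ 2))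
  have hF_nonneg : ∀ k, ∀ y ∈ Ioi (0 : ℝ), 0 ≤ F k y := fun k y hy => by
    have := Gamma_pos_of_pos (show 0 < (k : ℝ) + ν by positivity)
    have : 0 < y := hy
    positivity
  have hF_int : ∀ k, IntegrableOn (F k) (Ioi 0) := fun k =>
    have : 0 ≤ (k : ℝ) := k.cast_nonneg
    (integrableOn_rpow_mul_exp_neg_mul_sq hc (by linarith)).const_mul _
  have hF_sum : HasSum (fun k => ∫ y in Ioi 0, F k y)
      ((b / 2) ^ (ν - 1) / (2 * c ^ ν) * exp (b ^ 2 / (4 * c))) := by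
    have hexp := (NormedSpace.expSeries_div_hasSum_exp (b ^ 2 / (4 * c))).mul_left
      ((b / 2) ^ (ν - 1) / (2 * c ^ ν))
    rw [← exp_eq_exp_ℝ] at hexp
    exact hexp.congr_fun fun k => integral_besselI_series_term hν hb hc k
  have hF_norm : Summable fun k => ∫ y in Ioi 0, ‖F k y‖ := by
    refine hF_sum.summable.congr fun k => setIntegral_congr_fun measurableSet_Ioi fun y hy => ?_
    exact (Real.norm_of_nonneg (hF_nonneg k y hy)).symm
  rw [hF_sum.unique (hasSum_integral_of_summable_integral_norm hF_int hF_norm)]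
  refine setIntegral_congr_fun measurableSet_Ioi fun y hy => ?_
  rw [rpow_mul_besselI_sub_one_eq_tsum hb.le hy, ← tsum_mul_right]
  exact tsum_congr fun k => by ring

noncomputable def besselKernel (a ν t x y : ℝ) : ℝ :=
  (y / t) * (y / x) ^ (a - 1 / 2) * exp (-(x ^ 2 + y ^ 2) / (2 * t))
    * besselI (ν - 1) (x * y / t)

lemma exp_mul_rpow_mul_besselKernel {a d ν t x lam y : ℝ} (hν : ν = d + a + 1 / 2)
    (ht : 0 < t) (hx : 0 < x) (hy : 0 < y) :
    exp (-lam * y ^ 2) * y ^ d * besselKernel a ν t x y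
      = x ^ (1 / 2 - a) * exp (-x ^ 2 / (2 * t)) / t
        * (y ^ ν * besselI (ν - 1) (x / t * y) * exp (-(lam + 1 / (2 * t)) * y ^ 2)) := by
  have hexp : exp (-lam * y ^ 2) * exp (-(x ^ 2 + y ^ 2) / (2 * t))
      = exp (-x ^ 2 / (2 * t)) * exp (-(lam + 1 / (2 * t)) * y ^ 2) := by
    rw [← exp_add, ← exp_add]; congr 1; field_simp; ring
  have hpow : y ^ d * y * (y / x) ^ (a - 1 / 2) = x ^ (1 / 2 - a) * y ^ ν := by
    rw [div_rpow hy.le hx.le, show 1 / 2 - a = -(a - 1 / 2) by ring, rpow_neg hx.le,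
      show ν = d + 1 + (a - 1 / 2) by rw [hν]; ring, rpow_add hy, rpow_add hy, rpow_one]
    field_simp
  rw [besselKernel, show x * y / t = x / t * y by ring]
  linear_combination (exp (-lam * y ^ 2) * exp (-(x ^ 2 + y ^ 2) / (2 * t))
      * besselI (ν - 1) (x / t * y) / t) * hpow
    + (x ^ (1 / 2 - a) * y ^ ν * besselI (ν - 1) (x / t * y) / t) * hexp

lemma besselKernel_transform_closed_form {a d ν t x lam : ℝ} (hν : ν = d + a + 1 / 2)
    (ht : 0 < t) (hx : 0 < x) (hc : 0 < lam + 1 / (2 * t)) :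
    x ^ (1 / 2 - a) * exp (-x ^ 2 / (2 * t)) / t
        * ((x / t / 2) ^ (ν - 1) / (2 * (lam + 1 / (2 * t)) ^ ν)
          * exp ((x / t) ^ 2 / (4 * (lam + 1 / (2 * t)))))
      = x ^ d * (1 + 2 * lam * t) ^ (-ν) * exp (-lam * x ^ 2 / (1 + 2 * lam * t)) := by
  set c := lam + 1 / (2 * t) with hc_def
  have h2t : 0 < 2 * t := by positivity
  have h2tc : 1 + 2 * lam * t = 2 * t * c := by rw [hc_def]; field_simp; ring
  have hexp : exp (-x ^ 2 / (2 * t)) * exp ((x / t) ^ 2 / (4 * c))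
      = exp (-lam * x ^ 2 / (1 + 2 * lam * t)) := by
    rw [← exp_add, h2tc, show lam = c - 1 / (2 * t) by rw [hc_def]; ring]
    congr 1; field_simp; ring
  have hpow : x ^ (1 / 2 - a) / t * ((x / t / 2) ^ (ν - 1) / (2 * c ^ ν))
      = x ^ d * (1 + 2 * lam * t) ^ (-ν) := by
    rw [h2tc, rpow_neg (by positivity), mul_rpow h2t.le hc.le, div_div, mul_comm t 2,
      div_rpow hx.le h2t.le, rpow_sub_one h2t.ne', rpow_sub_one hx.ne',
      show d = 1 / 2 - a + ν - 1 by rw [hν]; ring, rpow_sub_one hx.ne', rpow_add hx]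
    field_simp
  linear_combination exp (-x ^ 2 / (2 * t)) * exp ((x / t) ^ 2 / (4 * c)) * hpow
    + x ^ d * (1 + 2 * lam * t) ^ (-ν) * hexp

theorem stmt_7_general (a μ d ν t x lam : ℝ)
    (hd : d = 1 / 2 - a + Real.sqrt (μ / 2 + (a - 1 / 2) ^ 2))
    (hν : ν = d + a + 1 / 2)
    (ht : 0 < t) (hx : 0 < x) (hlam : 0 ≤ lam)
    (p : ℝ → ℝ)
    (hp : ∀ y, p y = (y / t) * (y / x) ^ (a - 1 / 2)
        * Real.exp (-(x ^ 2 + y ^ 2) / (2 * t)) * besselI (ν - 1) (x * y / t)) :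
    (∫ y in Set.Ioi (0 : ℝ), Real.exp (-lam * y ^ 2) * y ^ d * p y)
      = x ^ d * (1 + 2 * lam * t) ^ (-ν)
        * Real.exp (-lam * x ^ 2 / (1 + 2 * lam * t)) := by
  have hν_pos : 0 < ν := by
    rw [hν, hd]; linarith [sqrt_nonneg (μ / 2 + (a - 1 / 2) ^ 2)]
  have hc : 0 < lam + 1 / (2 * t) := by positivity
  have hintegrand : ∀ y ∈ Ioi (0 : ℝ), exp (-lam * y ^ 2) * y ^ d * p y
      = x ^ (1 / 2 - a) * exp (-x ^ 2 / (2 * t)) / t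
        * (y ^ ν * besselI (ν - 1) (x / t * y) * exp (-(lam + 1 / (2 * t)) * y ^ 2)) :=
    fun y hy => by rw [hp]; exact exp_mul_rpow_mul_besselKernel hν ht hx hy
  rw [setIntegral_congr_fun measurableSet_Ioi hintegrand, integral_const_mul,
    integral_rpow_mul_besselI_sub_one_mul_exp_neg_mul_sq hν_pos (by positivity) hc,
    besselKernel_transform_closed_form hν ht hx hc]

/-- The generalized Laplace transform identity (3.21) for the fundamental
solution (3.22) of `u_t = (1/2) u_xx + (a/x) u_x - (μ/(4x²)) u` associated with the
Bessel process `dX_t = (a/X_t) dt + dW_t`. -/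
theorem stmt_7 (a μ d ν t x lam : ℝ) (ha : 1 / 2 < a) (hμ : 0 ≤ μ)
    (hd : d = 1 / 2 - a + Real.sqrt (μ / 2 + (a - 1 / 2) ^ 2))
    (hν : ν = d + a + 1 / 2)
    (ht : 0 < t) (hx : 0 < x) (hlam : 0 ≤ lam)
    (p : ℝ → ℝ)
    (hp : ∀ y, p y = (y / t) * (y / x) ^ (a - 1 / 2)
        * Real.exp (-(x ^ 2 + y ^ 2) / (2 * t)) * besselI (ν - 1) (x * y / t)) :
    (∫ y in Set.Ioi (0 : ℝ), Real.exp (-lam * y ^ 2) * y ^ d * p y)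
      = x ^ d * (1 + 2 * lam * t) ^ (-ν)
        * Real.exp (-lam * x ^ 2 / (1 + 2 * lam * t)) :=
  stmt_7_general a μ d ν t x lam hd hν ht hx hlam p hp
end

section
/- Let n > 0 and μ ≥ 0, and set d = (1/4)(2 − n + √((n−2)² + 8μ)), α = d + n/2, and β = 2d + n/2. For all t > 0, x > 0, and λ ≥ 0, with p(t,x,y) = (1/(2t)) (x/y)^{(1−n/2)/2} I_{β−1}(√(xy)/t) exp( −(x+y)/(2t) ), one has ∫_0^∞ e^{−λ y} p(t,x,y) dy = e^{−x/(2t)} (x/(2t))^d · Γ(α) ₁F₁(α, β, x/(2t + 4t²λ)) / ( Γ(β) (1 + 2λt)^α ). -/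
open Real MeasureTheory

/-- Kummer's confluent hypergeometric function
`₁F₁(a,b,z) = ∑_{k=0}^∞ ((a)_k/(b)_k) zᵏ/k!`. -/
noncomputable def hyp1F1 (a b z : ℝ) : ℝ :=
  ∑' k : ℕ, ((∏ i ∈ Finset.range k, (a + (i : ℝ))) / (∏ i ∈ Finset.range k, (b + (i : ℝ))))
      * z ^ k / (Nat.factorial k : ℝ)

/-! Expanding `I_{β-1}` in its power series, `e^{-λy} p(t,x,y)` becomes a series in the functions
`y^{k+α-1} e^{-ay}` with `a = (1 + 2λt)/(2t)`; the exponents of `x` and `y` collapse to `k + d` and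
`k + α - 1` exactly because `β = 2d + n/2` and `α = d + n/2`. Each term integrates to
`Γ(k+α)/a^{k+α}`, and all terms are nonnegative, so the series may be integrated termwise.
Writing `Γ(k+α) = Γ(α)(α)_k`, `Γ(k+β) = Γ(β)(β)_k` and using `β = d + α` turns the resulting
series into `Γ(α)/Γ(β)` times the Kummer series at `x/(2t(1 + 2λt))`. -/

open Set Nat

noncomputable def hyp1F1Term (a b z : ℝ) (k : ℕ) : ℝ :=
  (∏ i ∈ Finset.range k, (a + (i : ℝ))) / (∏ i ∈ Finset.range k, (b + (i : ℝ))) * z ^ k / k !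

theorem hyp1F1_eq_tsum (a b z : ℝ) : hyp1F1 a b z = ∑' k, hyp1F1Term a b z k := rfl

theorem summable_hyp1F1Term {a b z : ℝ} (ha : 0 < a) (hab : a ≤ b) (hz : 0 ≤ z) :
    Summable (hyp1F1Term a b z) := by
  have hb : 0 < b := ha.trans_le hab
  refine Summable.of_nonneg_of_le (fun k => by unfold hyp1F1Term; positivity) (fun k => ?_)
    (Real.summable_pow_div_factorial z)
  have hratio : (∏ i ∈ Finset.range k, (a + (i : ℝ))) / (∏ i ∈ Finset.range k, (b + (i : ℝ))) ≤ 1 :=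
    div_le_one_of_le₀ (Finset.prod_le_prod (fun i _ => by positivity) fun i _ => by linarith)
      (by positivity)
  calc hyp1F1Term a b z k ≤ 1 * z ^ k / k ! := by unfold hyp1F1Term; gcongr
    _ = z ^ k / k ! := by rw [one_mul]

theorem Real.Gamma_natCast_add_eq_mul_prod {c : ℝ} (hc : ∀ m : ℕ, c ≠ -m) (k : ℕ) :
    Gamma (k + c) = Gamma c * ∏ i ∈ Finset.range k, (c + i) := by
  induction k with
  | zero => simp
  | succ k ih =>
    have hkc : (k : ℝ) + c ≠ 0 := fun h => hc k (by linarith)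
    rw [Nat.cast_succ, add_right_comm, Gamma_add_one hkc, ih, Finset.prod_range_succ]
    ring

theorem div_rpow_mul_sqrt_mul_div_rpow {x y s : ℝ} (hx : 0 < x) (hy : 0 < y) (hs : 0 < s)
    (c e : ℝ) :
    (x / y) ^ c * (√(x * y) / s) ^ e = x ^ (c + e / 2) * y ^ (e / 2 - c) / s ^ e := by
  have hsqrt : ∀ {u : ℝ}, 0 < u → √u ^ e = u ^ (e / 2) := fun hu => by
    rw [sqrt_eq_rpow, ← rpow_mul hu.le]; ring_nf
  rw [sqrt_mul hx.le, div_rpow hx.le hy.le, div_rpow (by positivity) hs.le,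
    mul_rpow (sqrt_nonneg x) (sqrt_nonneg y), hsqrt hx, hsqrt hy, rpow_add hx, rpow_sub hy]
  have : 0 < y ^ c := rpow_pos_of_pos hy c
  field_simp

theorem div_rpow_mul_besselI_sqrt_mul {x y t : ℝ} (hx : 0 < x) (hy : 0 < y) (ht : 0 < t)
    (c ν : ℝ) :
    (x / y) ^ c * besselI ν (√(x * y) / t) = ∑' k : ℕ, x ^ (c + (2 * k + ν) / 2)
      * y ^ ((2 * k + ν) / 2 - c) / ((2 * t) ^ (2 * (k : ℝ) + ν) * (k ! * Gamma (k + ν + 1))) := by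
  rw [besselI, ← tsum_mul_left]
  refine tsum_congr fun k => ?_
  rw [div_div, mul_comm t, ← mul_div_assoc, div_rpow_mul_sqrt_mul_div_rpow hx hy (by positivity),
    div_div]

theorem integral_tsum_rpow_mul_exp_neg_mul_Ioi {c : ℕ → ℝ} {a s : ℝ} (hc : ∀ k, 0 ≤ c k)
    (ha : 0 < a) (hs : 0 < s)
    (hsum : Summable fun k : ℕ => c k * ((1 / a) ^ ((k : ℝ) + s) * Gamma (k + s))) :
    ∫ y in Ioi 0, ∑' k : ℕ, c k * (y ^ ((k : ℝ) + s - 1) * exp (-(a * y)))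
      = ∑' k : ℕ, c k * ((1 / a) ^ ((k : ℝ) + s) * Gamma (k + s)) := by
  have hks : ∀ k : ℕ, 0 < (k : ℝ) + s := fun k => by positivity
  have hint : ∀ k : ℕ,
      IntegrableOn (fun y => c k * (y ^ ((k : ℝ) + s - 1) * exp (-(a * y)))) (Ioi 0) := by
    intro k
    refine Integrable.const_mul ?_ _
    simpa [rpow_one, neg_mul, IntegrableOn] using
      integrableOn_rpow_mul_exp_neg_mul_rpow (by linarith [hks k]) zero_lt_one ha
  have hval : ∀ k : ℕ, ∫ y in Ioi 0, c k * (y ^ ((k : ℝ) + s - 1) * exp (-(a * y)))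
      = c k * ((1 / a) ^ ((k : ℝ) + s) * Gamma (k + s)) := fun k => by
    rw [integral_const_mul, integral_rpow_mul_exp_neg_mul_Ioi (hks k) ha]
  have hnorm : ∀ k : ℕ, ∫ y in Ioi 0, ‖c k * (y ^ ((k : ℝ) + s - 1) * exp (-(a * y)))‖
      = c k * ((1 / a) ^ ((k : ℝ) + s) * Gamma (k + s)) := fun k => by
    rw [← hval k]
    refine setIntegral_congr_fun measurableSet_Ioi fun y (hy : 0 < y) => norm_of_nonneg ?_
    have := hc k
    positivity
  rw [← integral_tsum_of_summable_integral_norm hint (by simpa only [hnorm] using hsum)]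
  exact tsum_congr hval

theorem exp_neg_mul_besselKernel_eq_tsum {n d α β t x y lam : ℝ} (hα : α = d + n / 2)
    (hβ : β = 2 * d + n / 2) (ht : 0 < t) (hx : 0 < x) (hy : 0 < y) :
    exp (-lam * y) * (1 / (2 * t) * (x / y) ^ ((1 - n / 2) / 2)
        * besselI (β - 1) (√(x * y) / t) * exp (-(x + y) / (2 * t)))
      = ∑' k : ℕ, exp (-x / (2 * t)) * x ^ ((k : ℝ) + d)
          / ((2 * t) ^ (2 * (k : ℝ) + β) * (k ! * Gamma (k + β)))
          * (y ^ ((k : ℝ) + α - 1) * exp (-((1 + 2 * lam * t) / (2 * t) * y))) := by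
  have hT : 0 < 2 * t := by positivity
  have hexp : exp (-lam * y) * exp (-(x + y) / (2 * t))
      = exp (-x / (2 * t)) * exp (-((1 + 2 * lam * t) / (2 * t) * y)) := by
    rw [← exp_add, ← exp_add]
    congr 1
    field_simp
    ring
  calc _ = exp (-lam * y) * exp (-(x + y) / (2 * t)) / (2 * t)
        * ((x / y) ^ ((1 - n / 2) / 2) * besselI (β - 1) (√(x * y) / t)) := by ring
    _ = _ := by
      rw [div_rpow_mul_besselI_sqrt_mul hx hy ht, ← tsum_mul_left, hexp]
      refine tsum_congr fun k => ?_
      have hxexp : (1 - n / 2) / 2 + (2 * k + (β - 1)) / 2 = (k : ℝ) + d := by rw [hβ]; ring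
      have hyexp : (2 * k + (β - 1)) / 2 - (1 - n / 2) / 2 = (k : ℝ) + α - 1 := by
        rw [hα, hβ]; ring
      have hTexp : (2 * t) ^ (2 * (k : ℝ) + β) = (2 * t) ^ (2 * (k : ℝ) + (β - 1)) * (2 * t) := by
        rw [← rpow_add_one hT.ne']; ring_nf
      rw [hxexp, hyexp, hTexp, add_assoc (k : ℝ), sub_add_cancel]
      field_simp

theorem mul_Gamma_div_rpow_eq_hyp1F1Term {d α β s L x : ℝ} (hβα : β = d + α) (hα : 0 < α)
    (hβ : 0 < β) (hs : 0 < s) (hL : 0 < L) (hx : 0 < x) (k : ℕ) :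
    exp (-x / s) * x ^ ((k : ℝ) + d) / (s ^ (2 * (k : ℝ) + β) * (k ! * Gamma (k + β)))
        * ((1 / (L / s)) ^ ((k : ℝ) + α) * Gamma (k + α))
      = exp (-x / s) * (x / s) ^ d * Gamma α / (Gamma β * L ^ α)
        * hyp1F1Term α β (x / (s * L)) k := by
  have hneg : ∀ {c : ℝ}, 0 < c → ∀ m : ℕ, c ≠ -m := fun hc m => by
    have : (0 : ℝ) ≤ m := m.cast_nonneg
    linarith
  rw [Gamma_natCast_add_eq_mul_prod (hneg hα), Gamma_natCast_add_eq_mul_prod (hneg hβ),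
    hyp1F1Term, one_div_div, rpow_add hx, rpow_natCast,
    show 2 * (k : ℝ) + β = k + k + d + α by rw [hβα]; ring,
    rpow_add hs, rpow_add hs, rpow_add hs, rpow_natCast, rpow_add (by positivity), rpow_natCast,
    div_rpow hs.le hL.le, div_rpow hx.le hs.le, div_pow, div_pow, mul_pow]
  have : 0 < Gamma β := Gamma_pos_of_pos hβ
  have : 0 < ∏ i ∈ Finset.range k, (β + (i : ℝ)) := Finset.prod_pos fun i _ => by positivity
  have : 0 < s ^ d := rpow_pos_of_pos hs d
  have : 0 < s ^ α := rpow_pos_of_pos hs α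
  have : 0 < L ^ α := rpow_pos_of_pos hL α
  field_simp

/-- The two-dimensional Laplace transform of the joint density of
`(X_t, ∫_0^t X_s^{-1} ds)` for the squared Bessel process, computed from the fundamental
solution (4.3) of `u_t = 2x u_xx + n u_x - (μ/x) u`. -/
theorem stmt_11 (n μ d α β t x lam : ℝ) (hn : 0 < n) (hμ : 0 ≤ μ)
    (hd : d = (1 / 4) * (2 - n + Real.sqrt ((n - 2) ^ 2 + 8 * μ)))
    (hα : α = d + n / 2) (hβ : β = 2 * d + n / 2)
    (ht : 0 < t) (hx : 0 < x) (hlam : 0 ≤ lam)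
    (p : ℝ → ℝ)
    (hp : ∀ y, p y = (1 / (2 * t)) * (x / y) ^ ((1 - n / 2) / 2)
        * besselI (β - 1) (Real.sqrt (x * y) / t)
        * Real.exp (-(x + y) / (2 * t))) :
    (∫ y in Set.Ioi (0 : ℝ), Real.exp (-lam * y) * p y)
      = Real.exp (-x / (2 * t)) * (x / (2 * t)) ^ d
        * (Real.Gamma α * hyp1F1 α β (x / (2 * t + 4 * t ^ 2 * lam)))
          / (Real.Gamma β * (1 + 2 * lam * t) ^ α) := by
  have hd0 : 0 ≤ d := by
    have : |n - 2| ≤ √((n - 2) ^ 2 + 8 * μ) := abs_le_sqrt (by linarith)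
    rw [hd]
    linarith [le_abs_self (n - 2)]
  have hα0 : 0 < α := by rw [hα]; positivity
  have hβ0 : 0 < β := by rw [hβ]; positivity
  have hT : 0 < 2 * t := by positivity
  have hL : 0 < 1 + 2 * lam * t := by positivity
  have hterm := mul_Gamma_div_rpow_eq_hyp1F1Term (by rw [hα, hβ]; ring) hα0 hβ0 hT hL hx
  have hsum := ((summable_hyp1F1Term hα0 (by rw [hα, hβ]; linarith) (by positivity)).mul_left
    (exp (-x / (2 * t)) * (x / (2 * t)) ^ d * Gamma α / (Gamma β * (1 + 2 * lam * t) ^ α))).congr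
    fun k => (hterm k).symm
  simp only [hp]
  rw [setIntegral_congr_fun measurableSet_Ioi fun y (hy : 0 < y) =>
      exp_neg_mul_besselKernel_eq_tsum hα hβ ht hx hy,
    integral_tsum_rpow_mul_exp_neg_mul_Ioi (fun k => by positivity) (by positivity) hα0 hsum,
    tsum_congr hterm, tsum_mul_left, ← hyp1F1_eq_tsum,
    show 2 * t + 4 * t ^ 2 * lam = 2 * t * (1 + 2 * lam * t) by ring]
  ring
end

section
/- Let σ > 0, μ ≥ 0, A > 0, and B, C be real with σ² + 2C > 0, and set ν = √(σ² + 2C)/σ; assume ν is not an integer. Let f : (0,∞) → ℝ be differentiable and satisfy the Riccati equation σ x f'(x) − σ f(x) + (1/2) f(x)² + 2σμ x² = (1/2) A x² + B x + C for all x > 0, and let F : (0,∞) → ℝ be differentiable with F'(x) = f(x)/x. Fix y > 0 and real constants C₁, C₂, and define for t > 0, x > 0: p(t,x,y) = ( √(Axy) / (2σ sinh(√A t/2)) ) e^{ −(F(x) − F(y))/(2σ) } exp( −Bt/(2σ) − √A (x+y)/(2σ tanh(√A t/2)) ) · ( C₁ I_ν( √(Axy)/(σ sinh(√A t/2)) )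 + C₂ I_{−ν}( √(Axy)/(σ sinh(√A t/2)) ) ). Then for all t > 0 and x > 0, ∂_t p = σ x ∂²_x p + f(x) ∂_x p − μ x p. -/
/-!
The gauge substitution `p = exp (-(F x - F y) / (2σ)) * N` removes the drift: thanks to the
Riccati equation, `p` solves `p_t = σ x p_xx + f p_x - μ x p` as soon as `N` solves
`N_t = σ x N_xx - (A x / (4σ) + B / (2σ) + C / (2σ x)) N`. This reduced equation has the
solutions `N = exp (-B t / (2σ) - γ t * (x + y)) * G (β t * y * x)` with
`γ = √A coth (√A t / 2) / (2σ)` and `β = A / (4σ² sinh² (√A t / 2))`, because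
`γ' = -σβ`, `β' = -2σγβ` and `γ² = A / (4σ²) + β`, whenever `G` solves `u² G'' = (u + κ) G`
with `κ = C / (2σ²) = (ν² - 1) / 4`. Finally `√u I_{±ν}(2√u) = u^{(1 ± ν)/2} S(u)` for an entire
power series `S` with `u S'' + (1 ± ν) S' = S`, which is exactly that equation.
-/

open Real MeasureTheory

open Filter Topology

noncomputable section

def powerSeriesSum (c : ℕ → ℝ) (u : ℝ) : ℝ := ∑' k, c k * u ^ k

def derivCoeff (c : ℕ → ℝ) (k : ℕ) : ℝ := (k + 1) * c (k + 1)

section PowerSeries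

variable {c : ℕ → ℝ}

lemma summable_derivCoeff_mul_pow (hc : ∀ r, Summable fun k => c k * r ^ k) (u : ℝ) :
    Summable fun k => derivCoeff c k * u ^ k := by
  set R := |u| + 1
  have hR : 1 ≤ R := le_add_of_nonneg_left (abs_nonneg u)
  refine .of_norm_bounded ((summable_nat_add_iff 1).2 (hc (2 * R)).abs) fun k => ?_
  have hk : ((k : ℝ) + 1) ≤ 2 ^ (k + 1) := by exact_mod_cast (Nat.lt_two_pow_self (n := k + 1)).le
  have hu : |u| ^ k ≤ R ^ (k + 1) :=
    (pow_le_pow_left₀ (abs_nonneg u) (by linarith) k).trans (pow_le_pow_right₀ hR k.le_succ)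
  calc ‖derivCoeff c k * u ^ k‖ = ((k : ℝ) + 1) * |u| ^ k * |c (k + 1)| := by
        rw [derivCoeff, norm_mul, norm_mul, norm_pow, Real.norm_eq_abs, Real.norm_eq_abs,
          Real.norm_eq_abs, abs_of_nonneg (by positivity : (0 : ℝ) ≤ (k : ℝ) + 1)]
        ring
    _ ≤ 2 ^ (k + 1) * R ^ (k + 1) * |c (k + 1)| := by gcongr
    _ = |c (k + 1) * (2 * R) ^ (k + 1)| := by
        rw [abs_mul, abs_pow, abs_of_nonneg (by positivity : (0 : ℝ) ≤ 2 * R), mul_pow]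
        ring

lemma hasDerivAt_powerSeriesSum (hc : ∀ r, Summable fun k => c k * r ^ k) (u : ℝ) :
    HasDerivAt (powerSeriesSum c) (powerSeriesSum (derivCoeff c) u) u := by
  set R := |u| + 1
  -- splitting off `c 0`, each remaining term differentiates to one term of the derived series
  have hsplit : powerSeriesSum c = fun v => c 0 + ∑' k, c (k + 1) * v ^ (k + 1) := by
    funext v
    rw [powerSeriesSum, (hc v).tsum_eq_zero_add]
    simp
  have hterm (k : ℕ) (v : ℝ) :
      HasDerivAt (fun w => c (k + 1) * w ^ (k + 1)) (derivCoeff c k * v ^ k) v := by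
    refine ((hasDerivAt_pow (k + 1) v).const_mul (c (k + 1))).congr_deriv ?_
    simp only [derivCoeff, Nat.add_sub_cancel]
    push_cast
    ring
  have hbound (k : ℕ) (v : ℝ) (hv : v ∈ Metric.ball (0 : ℝ) R) :
      ‖derivCoeff c k * v ^ k‖ ≤ |derivCoeff c k * R ^ k| := by
    rw [mem_ball_zero_iff, Real.norm_eq_abs] at hv
    rw [Real.norm_eq_abs, abs_mul, abs_mul, abs_pow, abs_pow, abs_of_pos (by positivity : 0 < R)]
    gcongr
  have hu : u ∈ Metric.ball (0 : ℝ) R := by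
    rw [mem_ball_zero_iff, Real.norm_eq_abs]
    exact lt_add_one _
  rw [hsplit]
  exact (hasDerivAt_tsum_of_isPreconnected (summable_derivCoeff_mul_pow hc R).abs
    Metric.isOpen_ball (convex_ball 0 R).isPreconnected (fun k v _ => hterm k v) hbound hu
    ((summable_nat_add_iff 1).2 (hc u)) hu).const_add (c 0)

lemma hasSum_mul_powerSeriesSum_derivCoeff {u : ℝ}
    (hc : Summable fun k => derivCoeff c k * u ^ k) :
    HasSum (fun k => k * c k * u ^ k) (u * powerSeriesSum (derivCoeff c) u) := by
  have hshift : (fun k : ℕ => ((k + 1 : ℕ) : ℝ) * c (k + 1) * u ^ (k + 1))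
      = fun k => u * (derivCoeff c k * u ^ k) := by
    funext k
    simp only [derivCoeff]
    push_cast
    ring
  have h : HasSum _ (u * powerSeriesSum (derivCoeff c) u) := hc.hasSum.mul_left u
  rw [← hshift] at h
  simpa using (hasSum_nat_add_iff (f := fun k : ℕ => (k : ℝ) * c k * u ^ k) 1).1 h

end PowerSeries

def besselCoeff (ν : ℝ) (k : ℕ) : ℝ :=
  ((Nat.factorial k : ℝ) * Real.Gamma ((k : ℝ) + ν + 1))⁻¹

section BesselSeries

variable {ν : ℝ}

lemma besselCoeff_eq_mul_succ (hν : ∀ k : ℕ, (k : ℝ) + ν + 1 ≠ 0) (k : ℕ) :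
    besselCoeff ν k = (k + 1) * (k + ν + 1) * besselCoeff ν (k + 1) := by
  have hΓ : Real.Gamma (((k + 1 : ℕ) : ℝ) + ν + 1) = (k + ν + 1) * Real.Gamma (k + ν + 1) := by
    rw [← Real.Gamma_add_one (hν k)]
    push_cast
    ring_nf
  have hk : ((k : ℝ) + 1) ≠ 0 := by positivity
  rw [besselCoeff, besselCoeff, hΓ, Nat.factorial_succ, Nat.cast_mul, Nat.cast_succ,
    mul_inv, mul_inv, mul_inv, mul_inv]
  field_simp [hν k]

lemma summable_besselCoeff_mul_pow (hν : ∀ k : ℕ, (k : ℝ) + ν + 1 ≠ 0) (u : ℝ) :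
    Summable fun k => besselCoeff ν k * u ^ k := by
  refine summable_of_ratio_norm_eventually_le (r := 1 / 2) (by norm_num) ?_
  filter_upwards [eventually_ge_atTop ⌈2 * |u| + |ν|⌉₊] with k hk
  have hk' : 2 * |u| + |ν| ≤ k := Nat.ceil_le.1 hk
  have hlarge : 2 * |u| ≤ ((k : ℝ) + 1) * |(k : ℝ) + ν + 1| := by
    have : 2 * |u| + 1 ≤ |(k : ℝ) + ν + 1| := by
      rw [le_abs]; left; linarith [neg_abs_le ν]
    nlinarith [abs_nonneg ((k : ℝ) + ν + 1), abs_nonneg u]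
  have hterm : ‖besselCoeff ν k * u ^ k‖
      = ((k : ℝ) + 1) * |(k : ℝ) + ν + 1| * (|besselCoeff ν (k + 1)| * |u| ^ k) := by
    rw [besselCoeff_eq_mul_succ hν k, Real.norm_eq_abs, abs_mul, abs_mul, abs_mul, abs_pow,
      abs_of_pos (by positivity : (0 : ℝ) < k + 1)]
    ring
  rw [hterm, Real.norm_eq_abs, abs_mul, abs_pow, pow_succ]
  nlinarith [mul_nonneg (abs_nonneg (besselCoeff ν (k + 1))) (pow_nonneg (abs_nonneg u) k)]

lemma besselSeries_ode (hν : ∀ k : ℕ, (k : ℝ) + ν + 1 ≠ 0) (u : ℝ) :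
    u * powerSeriesSum (derivCoeff (derivCoeff (besselCoeff ν))) u
      + (ν + 1) * powerSeriesSum (derivCoeff (besselCoeff ν)) u
      = powerSeriesSum (besselCoeff ν) u := by
  have hS' := summable_derivCoeff_mul_pow (summable_besselCoeff_mul_pow hν)
  have h := (hasSum_mul_powerSeriesSum_derivCoeff
    (summable_derivCoeff_mul_pow hS' u)).add ((hS' u).hasSum.mul_left (ν + 1))
  refine h.unique ?_
  rw [powerSeriesSum]
  convert (summable_besselCoeff_mul_pow hν u).hasSum using 1
  funext k
  rw [besselCoeff_eq_mul_succ hν k, derivCoeff]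
  ring

end BesselSeries

def SolvesReducedBesselEq (κ : ℝ) (G G' G'' : ℝ → ℝ) : Prop :=
  ∀ u > 0, HasDerivAt G (G' u) u ∧ HasDerivAt G' (G'' u) u ∧ u ^ 2 * G'' u = (u + κ) * G u

namespace SolvesReducedBesselEq

variable {κ : ℝ} {G G' G'' : ℝ → ℝ}

lemma congr {G₂ : ℝ → ℝ} (h : SolvesReducedBesselEq κ G G' G'') (hG : ∀ u > 0, G₂ u = G u) :
    SolvesReducedBesselEq κ G₂ G' G'' := by
  intro u hu
  obtain ⟨hG', hG'', hode⟩ := h u hu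
  have heq : G =ᶠ[𝓝 u] G₂ := by
    filter_upwards [lt_mem_nhds hu] with v hv
    exact (hG v hv).symm
  exact ⟨hG'.congr_of_eventuallyEq heq.symm, hG'', by rw [hG u hu]; exact hode⟩

lemma linearCombination {H H' H'' : ℝ → ℝ} (hG : SolvesReducedBesselEq κ G G' G'')
    (hH : SolvesReducedBesselEq κ H H' H'') (a b : ℝ) :
    SolvesReducedBesselEq κ (fun u => a * G u + b * H u) (fun u => a * G' u + b * H' u)
      (fun u => a * G'' u + b * H'' u) := by
  intro u hu
  obtain ⟨hG', hG'', hGode⟩ := hG u hu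
  obtain ⟨hH', hH'', hHode⟩ := hH u hu
  refine ⟨(hG'.const_mul a).add (hH'.const_mul b), (hG''.const_mul a).add (hH''.const_mul b), ?_⟩
  linear_combination a * hGode + b * hHode

end SolvesReducedBesselEq

lemma solvesReducedBesselEq_rpow_mul {m : ℝ} {S S' S'' : ℝ → ℝ}
    (hS : ∀ u > 0, HasDerivAt S (S' u) u) (hS' : ∀ u > 0, HasDerivAt S' (S'' u) u)
    (hode : ∀ u > 0, u * S'' u + 2 * m * S' u = S u) :
    SolvesReducedBesselEq (m * (m - 1)) (fun u => u ^ m * S u)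
      (fun u => m * u ^ (m - 1) * S u + u ^ m * S' u)
      (fun u => m * (m - 1) * u ^ (m - 2) * S u + 2 * m * u ^ (m - 1) * S' u + u ^ m * S'' u) := by
  intro u hu
  have hpow (e : ℝ) : HasDerivAt (fun v => v ^ e) (e * u ^ (e - 1)) u :=
    Real.hasDerivAt_rpow_const (Or.inl hu.ne')
  refine ⟨((hpow m).mul (hS u hu)).congr_deriv (by ring), ?_, ?_⟩
  · refine ((((hpow (m - 1)).const_mul m).mul (hS u hu)).add
      ((hpow m).mul (hS' u hu))).congr_deriv ?_
    rw [show m - 1 - 1 = m - 2 by ring]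
    ring
  · have h1 : u ^ (m - 1) = u ^ m / u := by rw [Real.rpow_sub hu, Real.rpow_one]
    have h2 : u ^ (m - 2) = u ^ m / u ^ 2 := by rw [Real.rpow_sub hu, Real.rpow_two]
    dsimp only
    rw [h1, h2]
    field_simp
    linear_combination u * hode u hu

def besselNormal (ν u : ℝ) : ℝ := √u * besselI ν (2 * √u)

lemma besselNormal_eq {ν u : ℝ} (hu : 0 < u) :
    besselNormal ν u = u ^ ((1 + ν) / 2) * powerSeriesSum (besselCoeff ν) u := by
  have hpow (k : ℕ) : √u * √u ^ (2 * (k : ℝ) + ν) = u ^ ((1 + ν) / 2) * u ^ k := by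
    have h := Real.rpow_add (Real.sqrt_pos.2 hu) 1 (2 * (k : ℝ) + ν)
    rw [Real.rpow_one] at h
    rw [← h, Real.sqrt_eq_rpow, ← Real.rpow_mul hu.le, ← Real.rpow_natCast, ← Real.rpow_add hu]
    ring_nf
  rw [besselNormal, besselI, powerSeriesSum, ← tsum_mul_left, ← tsum_mul_left]
  refine tsum_congr fun k => ?_
  rw [mul_div_cancel_left₀ _ two_ne_zero, besselCoeff, div_eq_mul_inv, ← mul_assoc, hpow]
  ring

lemma exists_solvesReducedBesselEq_besselNormal {ν : ℝ} (hν : ∀ k : ℕ, (k : ℝ) + ν + 1 ≠ 0) :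
    ∃ G' G'', SolvesReducedBesselEq ((ν ^ 2 - 1) / 4) (besselNormal ν) G' G'' := by
  have hS := summable_besselCoeff_mul_pow hν
  have h := solvesReducedBesselEq_rpow_mul (m := (1 + ν) / 2)
    (fun u _ => hasDerivAt_powerSeriesSum hS u)
    (fun u _ => hasDerivAt_powerSeriesSum (summable_derivCoeff_mul_pow hS) u)
    (fun u _ => by rw [← besselSeries_ode hν u]; ring)
  rw [show (1 + ν) / 2 * ((1 + ν) / 2 - 1) = (ν ^ 2 - 1) / 4 by ring] at h
  exact ⟨_, _, h.congr fun u hu => besselNormal_eq hu⟩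

def kernelCoth (σ A t : ℝ) : ℝ := √A / (2 * σ * tanh (√A * t / 2))

def kernelCschSq (σ A t : ℝ) : ℝ := A / (4 * σ ^ 2 * sinh (√A * t / 2) ^ 2)

section KernelCoefficients

variable {σ A t : ℝ}

lemma kernelCoth_eq (σ A : ℝ) :
    kernelCoth σ A = fun t => √A * cosh (√A * t / 2) / (2 * σ * sinh (√A * t / 2)) := by
  funext t
  rw [kernelCoth, tanh_eq_sinh_div_cosh, ← mul_div_assoc, div_div_eq_mul_div]

lemma sinh_kernel_ne_zero (hA : 0 < A) (ht : t ≠ 0) : sinh (√A * t / 2) ≠ 0 := by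
  have := Real.sqrt_pos.2 hA
  rw [Real.sinh_ne_zero]
  positivity

lemma kernelCschSq_pos (hσ : σ ≠ 0) (hA : 0 < A) (ht : t ≠ 0) : 0 < kernelCschSq σ A t := by
  have := sinh_kernel_ne_zero hA ht
  rw [kernelCschSq]
  positivity

lemma kernelCoth_sq (hσ : σ ≠ 0) (hA : 0 < A) (ht : t ≠ 0) :
    kernelCoth σ A t ^ 2 = A / (4 * σ ^ 2) + kernelCschSq σ A t := by
  have hs := sinh_kernel_ne_zero hA ht
  rw [kernelCoth_eq, kernelCschSq, div_pow, mul_pow, Real.sq_sqrt hA.le, cosh_sq]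
  field_simp
  ring

lemma hasDerivAt_sinh_kernel (A t : ℝ) :
    HasDerivAt (fun τ => sinh (√A * τ / 2)) (cosh (√A * t / 2) * (√A / 2)) t :=
  (Real.hasDerivAt_sinh _).comp t (((hasDerivAt_id t).const_mul √A).div_const 2 |>.congr_deriv
    (by ring))

lemma hasDerivAt_cosh_kernel (A t : ℝ) :
    HasDerivAt (fun τ => cosh (√A * τ / 2)) (sinh (√A * t / 2) * (√A / 2)) t :=
  (Real.hasDerivAt_cosh _).comp t (((hasDerivAt_id t).const_mul √A).div_const 2 |>.congr_deriv
    (by ring))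

lemma hasDerivAt_kernelCoth (hσ : σ ≠ 0) (hA : 0 < A) (ht : t ≠ 0) :
    HasDerivAt (kernelCoth σ A) (-σ * kernelCschSq σ A t) t := by
  have hs := sinh_kernel_ne_zero hA ht
  rw [kernelCoth_eq]
  refine (((hasDerivAt_cosh_kernel A t).const_mul √A).div
    ((hasDerivAt_sinh_kernel A t).const_mul (2 * σ)) (by positivity)).congr_deriv ?_
  rw [kernelCschSq]
  field_simp
  rw [Real.sq_sqrt hA.le, cosh_sq]
  ring

lemma hasDerivAt_kernelCschSq (hσ : σ ≠ 0) (hA : 0 < A) (ht : t ≠ 0) :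
    HasDerivAt (kernelCschSq σ A) (-2 * σ * kernelCoth σ A t * kernelCschSq σ A t) t := by
  have hs := sinh_kernel_ne_zero hA ht
  refine ((hasDerivAt_const t A).div (((hasDerivAt_sinh_kernel A t).fun_pow 2).const_mul
    (4 * σ ^ 2)) (by positivity)).congr_deriv ?_
  rw [kernelCoth_eq, kernelCschSq]
  field_simp
  ring

end KernelCoefficients

def reducedKernel (σ B y : ℝ) (γ β G : ℝ → ℝ) (t x : ℝ) : ℝ :=
  exp (-B * t / (2 * σ) - γ t * (x + y)) * G (β t * y * x)

section ReducedKernel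

variable {σ A B y κ t x : ℝ} {γ β G G' G'' : ℝ → ℝ}

lemma hasDerivAt_exp_kernel_x (σ B y t : ℝ) (γ : ℝ → ℝ) (ξ : ℝ) :
    HasDerivAt (fun ζ => exp (-B * t / (2 * σ) - γ t * (ζ + y)))
      (-γ t * exp (-B * t / (2 * σ) - γ t * (ξ + y))) ξ :=
  ((((hasDerivAt_id' ξ).add_const y).const_mul (γ t)).const_sub (-B * t / (2 * σ))).exp
    |>.congr_deriv (by ring)

lemma hasDerivAt_reducedKernel_x (hG : SolvesReducedBesselEq κ G G' G'') (hβy : 0 < β t * y)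
    {ξ : ℝ} (hξ : 0 < ξ) :
    HasDerivAt (reducedKernel σ B y γ β G t)
      (exp (-B * t / (2 * σ) - γ t * (ξ + y))
        * (β t * y * G' (β t * y * ξ) - γ t * G (β t * y * ξ))) ξ := by
  have hG' := (hG _ (mul_pos hβy hξ)).1.comp ξ ((hasDerivAt_id' ξ).const_mul (β t * y))
  exact ((hasDerivAt_exp_kernel_x σ B y t γ ξ).mul hG').congr_deriv
    (by simp only [Function.comp_apply]; ring)

lemma hasDerivAt_reducedKernel_xx (hG : SolvesReducedBesselEq κ G G' G'') (hβy : 0 < β t * y)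
    (hx : 0 < x) :
    HasDerivAt (fun ξ => exp (-B * t / (2 * σ) - γ t * (ξ + y))
        * (β t * y * G' (β t * y * ξ) - γ t * G (β t * y * ξ)))
      (exp (-B * t / (2 * σ) - γ t * (x + y))
        * (γ t ^ 2 * G (β t * y * x) - 2 * γ t * (β t * y) * G' (β t * y * x)
          + (β t * y) ^ 2 * G'' (β t * y * x))) x := by
  obtain ⟨hG', hG'', -⟩ := hG _ (mul_pos hβy hx)
  have hlin := (hasDerivAt_id' x).const_mul (β t * y)
  exact ((hasDerivAt_exp_kernel_x σ B y t γ x).mul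
    (((hG''.comp x hlin).const_mul (β t * y)).fun_sub
      ((hG'.comp x hlin).const_mul (γ t)))).congr_deriv (by simp only [Function.comp_apply]; ring)

lemma hasDerivAt_reducedKernel_t (hG : SolvesReducedBesselEq κ G G' G'') (hσ : σ ≠ 0)
    (hx : 0 < x) (hβy : 0 < β t * y) (hγ : HasDerivAt γ (-σ * β t) t)
    (hβ : HasDerivAt β (-2 * σ * γ t * β t) t) (hγsq : γ t ^ 2 = A / (4 * σ ^ 2) + β t) :
    HasDerivAt (fun τ => reducedKernel σ B y γ β G τ x)
      (σ * x * (exp (-B * t / (2 * σ) - γ t * (x + y))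
          * (γ t ^ 2 * G (β t * y * x) - 2 * γ t * (β t * y) * G' (β t * y * x)
            + (β t * y) ^ 2 * G'' (β t * y * x)))
        - (A * x / (4 * σ) + B / (2 * σ) + σ * κ / x) * reducedKernel σ B y γ β G t x) t := by
  obtain ⟨hG', -, hode⟩ := hG _ (mul_pos hβy hx)
  have hexp : HasDerivAt (fun τ => -B * τ / (2 * σ) - γ τ * (x + y))
      (-B / (2 * σ) + σ * β t * (x + y)) t :=
    ((((hasDerivAt_id' t).const_mul (-B)).div_const (2 * σ)).sub (hγ.mul_const (x + y))).congr_deriv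
      (by ring)
  refine (hexp.exp.mul (hG'.comp t (((hβ.mul_const y).mul_const x)))).congr_deriv ?_
  simp only [Function.comp_apply, reducedKernel]
  set E := exp (-B * t / (2 * σ) - γ t * (x + y))
  set g := G (β t * y * x)
  set g' := G' (β t * y * x)
  set g'' := G'' (β t * y * x)
  have hγsq' : 4 * σ ^ 2 * γ t ^ 2 = A + 4 * σ ^ 2 * β t := by
    rw [hγsq]
    field_simp
  field_simp
  linear_combination (-2 * x ^ 2 * E * g) * hγsq' - 8 * σ ^ 2 * E * hode

end ReducedKernel

lemma pde_of_reduced_pde {σ μ A B C y t x : ℝ} {f F : ℝ → ℝ} {N p : ℝ → ℝ → ℝ} {N' : ℝ → ℝ}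
    {N'' : ℝ} (hσ : σ ≠ 0) (hx : 0 < x) (hf : DifferentiableAt ℝ f x)
    (hF : ∀ ξ > 0, HasDerivAt F (f ξ / ξ) ξ)
    (hRic : σ * x * deriv f x - σ * f x + (1 / 2) * (f x) ^ 2 + 2 * σ * μ * x ^ 2
      = (1 / 2) * A * x ^ 2 + B * x + C)
    (hp : ∀ᶠ τ in 𝓝 t, p τ = fun ξ => exp (-(F ξ - F y) / (2 * σ)) * N τ ξ)
    (hNx : ∀ ξ > 0, HasDerivAt (N t) (N' ξ) ξ) (hNxx : HasDerivAt N' N'' x)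
    (hNt : HasDerivAt (fun τ => N τ x)
      (σ * x * N'' - (A * x / (4 * σ) + B / (2 * σ) + C / (2 * σ * x)) * N t x) t) :
    deriv (fun τ => p τ x) t
      = σ * x * deriv (deriv (fun ξ => p t ξ)) x + f x * deriv (fun ξ => p t ξ) x
        - μ * x * p t x := by
  set E := fun ξ => exp (-(F ξ - F y) / (2 * σ))
  have hE (ξ : ℝ) (hξ : 0 < ξ) : HasDerivAt E (-(f ξ / ξ) / (2 * σ) * E ξ) ξ :=
    (((hF ξ hξ).sub_const (F y)).fun_neg.div_const (2 * σ)).exp.congr_deriv (by ring)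
  have hpt : p t = fun ξ => E ξ * N t ξ := hp.self_of_nhds
  set P' := fun ξ => E ξ * (N' ξ - f ξ / (2 * σ * ξ) * N t ξ)
  have hpx (ξ : ℝ) (hξ : 0 < ξ) : HasDerivAt (p t) (P' ξ) ξ := by
    rw [hpt]
    exact ((hE ξ hξ).fun_mul (hNx ξ hξ)).congr_deriv (by simp only [P']; field_simp; ring)
  have hpxx : HasDerivAt P' _ x := (hE x hx).fun_mul (hNxx.fun_sub ((hf.hasDerivAt.fun_div
    ((hasDerivAt_id' x).const_mul (2 * σ)) (by positivity)).fun_mul (hNx x hx)))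
  have hderiv : deriv (p t) =ᶠ[𝓝 x] P' := by
    filter_upwards [lt_mem_nhds hx] with ξ hξ using (hpx ξ hξ).deriv
  have hpt' : HasDerivAt (fun τ => p τ x) (E x * (σ * x * N''
      - (A * x / (4 * σ) + B / (2 * σ) + C / (2 * σ * x)) * N t x)) t :=
    (hNt.const_mul (E x)).congr_of_eventuallyEq (hp.mono fun τ hτ => congrFun hτ x)
  rw [hpt'.deriv, hderiv.deriv_eq, hpxx.deriv, (hpx x hx).deriv, hpt]
  simp only [P']
  field_simp
  linear_combination 8 * E x * N t x * hRic

lemma sqrt_kernelCschSq_mul {σ A t : ℝ} (hσ : 0 < σ) (hA : 0 < A) (ht : 0 < t) (x y : ℝ) :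
    √(kernelCschSq σ A t * y * x) = √(A * x * y) / (2 * σ * sinh (√A * t / 2)) := by
  have hs : 0 < sinh (√A * t / 2) := Real.sinh_pos_iff.2 (by positivity)
  rw [kernelCschSq, show A / (4 * σ ^ 2 * sinh (√A * t / 2) ^ 2) * y * x
      = A * x * y / (2 * σ * sinh (√A * t / 2)) ^ 2 by ring,
    Real.sqrt_div' _ (by positivity), Real.sqrt_sq (by positivity)]

lemma besselKernel_eq_reducedKernel {σ A B ν y C₁ C₂ t : ℝ} (hσ : 0 < σ) (hA : 0 < A) (ht : 0 < t)
    (F : ℝ → ℝ) (x : ℝ) :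
    (√(A * x * y) / (2 * σ * sinh (√A * t / 2))) * exp (-(F x - F y) / (2 * σ))
        * exp (-B * t / (2 * σ) - √A * (x + y) / (2 * σ * tanh (√A * t / 2)))
        * (C₁ * besselI ν (√(A * x * y) / (σ * sinh (√A * t / 2)))
          + C₂ * besselI (-ν) (√(A * x * y) / (σ * sinh (√A * t / 2))))
      = exp (-(F x - F y) / (2 * σ)) * reducedKernel σ B y (kernelCoth σ A) (kernelCschSq σ A)
          (fun u => C₁ * besselNormal ν u + C₂ * besselNormal (-ν) u) t x := by
  have harg : √(A * x * y) / (σ * sinh (√A * t / 2))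
      = 2 * (√(A * x * y) / (2 * σ * sinh (√A * t / 2))) := by
    rw [mul_div_assoc', mul_assoc 2, mul_div_mul_left _ _ two_ne_zero]
  have hexp : √A * (x + y) / (2 * σ * tanh (√A * t / 2)) = kernelCoth σ A t * (x + y) := by
    rw [kernelCoth]
    ring
  rw [reducedKernel, besselNormal, besselNormal, sqrt_kernelCschSq_mul hσ hA ht, harg, hexp]
  ring

end

theorem stmt_14_general (σ μ A B C ν : ℝ) (hσ : 0 < σ) (hA : 0 < A)
    (hC : 0 < σ ^ 2 + 2 * C)
    (hν : ν = Real.sqrt (σ ^ 2 + 2 * C) / σ) (hνint : ∀ n : ℤ, ν ≠ (n : ℝ))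
    (f F : ℝ → ℝ)
    (hf : ∀ x > (0 : ℝ), DifferentiableAt ℝ f x)
    (hRic : ∀ x > (0 : ℝ),
      σ * x * deriv f x - σ * f x + (1 / 2) * (f x) ^ 2 + 2 * σ * μ * x ^ 2
        = (1 / 2) * A * x ^ 2 + B * x + C)
    (hF : ∀ x > (0 : ℝ), HasDerivAt F (f x / x) x)
    (y : ℝ) (hy : 0 < y) (C₁ C₂ : ℝ)
    (p : ℝ → ℝ → ℝ)
    (hp : ∀ t x, p t x =
      (Real.sqrt (A * x * y) / (2 * σ * Real.sinh (Real.sqrt A * t / 2)))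
        * Real.exp (-(F x - F y) / (2 * σ))
        * Real.exp (-B * t / (2 * σ)
            - Real.sqrt A * (x + y) / (2 * σ * Real.tanh (Real.sqrt A * t / 2)))
        * (C₁ * besselI ν (Real.sqrt (A * x * y) / (σ * Real.sinh (Real.sqrt A * t / 2)))
          + C₂ * besselI (-ν)
              (Real.sqrt (A * x * y) / (σ * Real.sinh (Real.sqrt A * t / 2))))) :
    ∀ t > (0 : ℝ), ∀ x > (0 : ℝ),
      deriv (fun τ => p τ x) t
        = σ * x * deriv (deriv (fun ξ => p t ξ)) x
          + f x * deriv (fun ξ => p t ξ) x - μ * x * p t x := by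
  intro t ht x hx
  have hκ : (ν ^ 2 - 1) / 4 = C / (2 * σ ^ 2) := by
    rw [hν, div_pow, Real.sq_sqrt hC.le]
    field_simp
    ring
  obtain ⟨G₁', G₁'', h₁⟩ := exists_solvesReducedBesselEq_besselNormal (ν := ν)
    fun k h => hνint (-k - 1) (by push_cast; linarith)
  obtain ⟨G₂', G₂'', h₂⟩ := exists_solvesReducedBesselEq_besselNormal (ν := -ν)
    fun k h => hνint (k + 1) (by push_cast; linarith)
  rw [neg_sq, hκ] at h₂
  rw [hκ] at h₁
  have hG := h₁.linearCombination h₂ C₁ C₂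
  have hβy : 0 < kernelCschSq σ A t * y := mul_pos (kernelCschSq_pos hσ.ne' hA ht.ne') hy
  refine pde_of_reduced_pde (y := y) hσ.ne' hx (hf x hx) hF (hRic x hx) ?_
    (fun ξ hξ => hasDerivAt_reducedKernel_x (B := B) hG hβy hξ)
    (hasDerivAt_reducedKernel_xx hG hβy hx)
    ((hasDerivAt_reducedKernel_t (B := B) hG hσ.ne' hx hβy (hasDerivAt_kernelCoth hσ.ne' hA ht.ne')
      (hasDerivAt_kernelCschSq hσ.ne' hA ht.ne') (kernelCoth_sq hσ.ne' hA ht.ne')).congr_deriv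
      (by field_simp))
  filter_upwards [lt_mem_nhds ht] with τ hτ
  funext ξ
  rw [hp]
  exact besselKernel_eq_reducedKernel hσ hA hτ F ξ

/-- The fundamental solution formula of Theorem 5.4 for the PDE
`u_t = σ x u_xx + f(x) u_x - μ x u` when the drift `f` solves the Riccati equation
`σ x f' - σ f + f²/2 + 2σμx² = (1/2)Ax² + Bx + C` with `A > 0`. -/
theorem stmt_14 (σ μ A B C ν : ℝ) (hσ : 0 < σ) (hμ : 0 ≤ μ) (hA : 0 < A)
    (hC : 0 < σ ^ 2 + 2 * C)
    (hν : ν = Real.sqrt (σ ^ 2 + 2 * C) / σ) (hνint : ∀ n : ℤ, ν ≠ (n : ℝ))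
    (f F : ℝ → ℝ)
    (hf : ∀ x > (0 : ℝ), DifferentiableAt ℝ f x)
    (hRic : ∀ x > (0 : ℝ),
      σ * x * deriv f x - σ * f x + (1 / 2) * (f x) ^ 2 + 2 * σ * μ * x ^ 2
        = (1 / 2) * A * x ^ 2 + B * x + C)
    (hF : ∀ x > (0 : ℝ), HasDerivAt F (f x / x) x)
    (y : ℝ) (hy : 0 < y) (C₁ C₂ : ℝ)
    (p : ℝ → ℝ → ℝ)
    (hp : ∀ t x, p t x =
      (Real.sqrt (A * x * y) / (2 * σ * Real.sinh (Real.sqrt A * t / 2)))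
        * Real.exp (-(F x - F y) / (2 * σ))
        * Real.exp (-B * t / (2 * σ)
            - Real.sqrt A * (x + y) / (2 * σ * Real.tanh (Real.sqrt A * t / 2)))
        * (C₁ * besselI ν (Real.sqrt (A * x * y) / (σ * Real.sinh (Real.sqrt A * t / 2)))
          + C₂ * besselI (-ν)
              (Real.sqrt (A * x * y) / (σ * Real.sinh (Real.sqrt A * t / 2))))) :
    ∀ t > (0 : ℝ), ∀ x > (0 : ℝ),
      deriv (fun τ => p τ x) t
        = σ * x * deriv (deriv (fun ξ => p t ξ)) x
          + f x * deriv (fun ξ => p t ξ) x - μ * x * p t x :=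
  stmt_14_general σ μ A B C ν hσ hA hC hν hνint f F hf hRic hF y hy C₁ C₂ p hp
end
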